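/- arXiv:2402.06862 — 4 statements merged into one kernel-verified Lean document; each statement's English description precedes it below -/
import Mathlib

section
/- In a combinatorial horoball over a 1-discrete metric space, if a geodesic edge-path in the horoball contains a horizontal segment whose depth is strictly less than the maximal depth among all horizontal segments of the geodesic, then that horizontal segment has length exactly 1. -/
/-- The combinatorial horoball over a metric space `X`: vertices `X × ℕ`,
vertical edges joining `(x,l)` and `(x,l+1)`, and horizontal edges joining
`(x,l)` and `(y,l)` (for `l ≥ 1`) whenever `0 < dist x y ≤ 2 ^ l`. -/
def horoball (X : Type*) [MetricSpace X] : SimpleGraph (X × ℕ) where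
  Adj p q := (p.1 = q.1 ∧ (p.2 + 1 = q.2 ∨ q.2 + 1 = p.2)) ∨
    (p.2 = q.2 ∧ 1 ≤ p.2 ∧ 0 < dist p.1 q.1 ∧ dist p.1 q.1 ≤ 2 ^ p.2)
  symm := by
    constructor
    rintro ⟨x, l⟩ ⟨y, m⟩ (⟨h1, h2⟩ | ⟨h1, h2, h3, h4⟩)
    · exact Or.inl ⟨h1.symm, h2.symm⟩
    · refine Or.inr ⟨h1.symm, ?_, by rwa [dist_comm], ?_⟩
      · exact h1 ▸ h2
      · rw [dist_comm]
        exact h1 ▸ h4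
  loopless := by
    constructor
    rintro ⟨x, l⟩ (⟨-, h2 | h2⟩ | ⟨-, -, h3, -⟩)
    · omega
    · omega
    · simp at h3

namespace HoroAux

variable {X : Type*} [MetricSpace X]

open SimpleGraph

/-- take by index -/
def wtake {V : Type*} {G : SimpleGraph V} :
    ∀ {u v : V} (p : G.Walk u v) (n : ℕ), G.Walk u (p.getVert n)
  | _, _, SimpleGraph.Walk.nil, _ => SimpleGraph.Walk.nil
  | _, _, SimpleGraph.Walk.cons h q, 0 => SimpleGraph.Walk.nil
  | _, _, SimpleGraph.Walk.cons h q, (n+1) => SimpleGraph.Walk.cons h (wtake q n)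

def wdrop {V : Type*} {G : SimpleGraph V} :
    ∀ {u v : V} (p : G.Walk u v) (n : ℕ), G.Walk (p.getVert n) v
  | _, _, SimpleGraph.Walk.nil, _ => SimpleGraph.Walk.nil
  | _, _, SimpleGraph.Walk.cons h q, 0 => SimpleGraph.Walk.cons h q
  | _, _, SimpleGraph.Walk.cons h q, (n+1) => wdrop q n

lemma length_wtake {V : Type*} {G : SimpleGraph V} {u v : V} (p : G.Walk u v) (n : ℕ) :
    (wtake p n).length = min n p.length := by
  induction p generalizing n with
  | nil => simp [wtake]
  | cons h q ih =>
    cases n with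
    | zero => simp [wtake]; rfl
    | succ n => simp [wtake, ih]

lemma length_wdrop {V : Type*} {G : SimpleGraph V} {u v : V} (p : G.Walk u v) (n : ℕ) :
    (wdrop p n).length = p.length - n := by
  induction p generalizing n with
  | nil => simp [wdrop]
  | cons h q ih =>
    cases n with
    | zero => simp [wdrop]; rfl
    | succ n => simp [wdrop, ih]

end HoroAux

namespace HoroAux

lemma hop {X : Type*} [MetricSpace X] (l : ℕ) :
    ∀ (n : ℕ) (f : ℕ → X), (∀ i, i < n → dist (f i) (f (i+1)) ≤ 2 ^ l) →
    ∃ w : (horoball X).Walk (f 0, l + 1) (f n, l + 1), w.length ≤ (n + 1) / 2 := by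
  intro n
  induction n using Nat.strong_induction_on with
  | _ n ih =>
    match n with
    | 0 => exact fun f _ => ⟨SimpleGraph.Walk.nil, by simp⟩
    | 1 =>
      intro f h
      by_cases he : f 0 = f 1
      · exact ⟨(SimpleGraph.Walk.nil).copy rfl (by rw [he]), by simp⟩
      · have hadj : (horoball X).Adj (f 0, l + 1) (f 1, l + 1) := by
          refine Or.inr ⟨rfl, by omega, dist_pos.2 he, ?_⟩
          calc dist (f 0) (f 1) ≤ 2 ^ l := h 0 (by omega)
          _ ≤ 2 ^ (l + 1) := by
            apply pow_le_pow_right₀ (by norm_num) (by omega)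
        exact ⟨SimpleGraph.Walk.cons hadj SimpleGraph.Walk.nil, by simp⟩
    | (n+2) =>
      intro f h
      obtain ⟨w, hw⟩ := ih n (by omega) (fun i => f (i + 2)) (fun i hi => h (i+2) (by omega))
      by_cases he : f 0 = f 2
      · exact ⟨w.copy (by rw [he]) rfl, by simp; omega⟩
      · have hd : dist (f 0) (f 2) ≤ 2 ^ (l+1) := by
          calc dist (f 0) (f 2) ≤ dist (f 0) (f 1) + dist (f 1) (f 2) := dist_triangle _ _ _
          _ ≤ 2 ^ l + 2 ^ l := add_le_add (h 0 (by omega)) (h 1 (by omega))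
          _ = 2 ^ (l+1) := by ring
        have hadj : (horoball X).Adj (f 0, l + 1) (f 2, l + 1) :=
          Or.inr ⟨rfl, by omega, dist_pos.2 he, hd⟩
        refine ⟨SimpleGraph.Walk.cons hadj w, ?_⟩
        simp only [SimpleGraph.Walk.length_cons]
        omega

end HoroAux

namespace HoroAux

lemma shortcut {X : Type*} [MetricSpace X] {u v : X × ℕ} (p : (horoball X).Walk u v)
    (a b m : ℕ) (hab : a + 2 ≤ b) (hbm : b ≤ m) (hm : m ≤ p.length)
    (hhor : ∀ i, a ≤ i → i < b → (p.getVert i).2 = (p.getVert (i + 1)).2)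
    (hl : (p.getVert a).2 < (p.getVert m).2) :
    ∃ q : (horoball X).Walk u v, q.length < p.length := by
  set l := (p.getVert a).2 with hl_def
  have hchain : ∀ d, a + d ≤ b → (p.getVert (a + d)).2 = l := by
    intro d
    induction d with
    | zero => intro _; simp [hl_def]
    | succ d ihd =>
      intro hdb
      have h1 := hhor (a + d) (by omega) (by omega)
      have h2 := ihd (by omega)
      rw [show a + (d + 1) = a + d + 1 by omega]
      omega
  have hchain' : ∀ i, a ≤ i → i ≤ b → (p.getVert i).2 = l := by
    intro i h1 h2
    have := hchain (i - a) (by omega)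
    rwa [show a + (i - a) = i by omega] at this
  have hbm' : b < m := by
    rcases eq_or_lt_of_le hbm with rfl | h
    · have := hchain' b (by omega) (le_refl b); omega
    · exact h
  have hex : ∃ i, b < i ∧ l + 1 ≤ (p.getVert i).2 := ⟨m, hbm', hl⟩
  set i₀ := Nat.find hex with hi0_def
  have hi0 := Nat.find_spec hex
  have hi0m : i₀ ≤ m := Nat.find_min' hex ⟨hbm', hl⟩
  have hA : ∀ i, b ≤ i → i < i₀ → (p.getVert i).2 ≤ l := by
    intro i h1 h2
    rcases eq_or_lt_of_le h1 with rfl | hlt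
    · exact (hchain' b (by omega) (le_refl b)).le
    · by_contra hc
      exact Nat.find_min hex h2 ⟨hlt, by omega⟩
  have hji : i₀ - 1 + 1 = i₀ := by omega
  set j := i₀ - 1 with hj_def
  have hjb : b ≤ j := by omega
  have hjlen : j < p.length := by omega
  have hDj : (p.getVert j).2 ≤ l := hA j hjb (by omega)
  have hDj1 : l + 1 ≤ (p.getVert (j + 1)).2 := by rw [hji]; exact hi0.2
  have hadjj := p.adj_getVert_succ hjlen
  have hfst : (p.getVert j).1 = (p.getVert (j + 1)).1 := by
    rcases hadjj with ⟨hf, -⟩ | ⟨hs, -⟩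
    · exact hf
    · omega
  have hDj1' : (p.getVert (j + 1)).2 = l + 1 := by
    rcases hadjj with ⟨-, hud⟩ | ⟨hs, -⟩ <;> omega
  -- the hop walk
  have hypH : ∀ i, i < j - a → dist ((fun i => (p.getVert (a + i)).1) i)
      ((fun i => (p.getVert (a + i)).1) (i + 1)) ≤ 2 ^ l := by
    intro i hi
    simp only
    have hil : a + i < p.length := by omega
    have hadj := p.adj_getVert_succ hil
    have hDi : (p.getVert (a + i)).2 ≤ l := by
      rcases le_or_gt b (a + i) with hcase | hcase
      · exact hA (a + i) hcase (by omega)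
      · exact (hchain' (a + i) (by omega) (by omega)).le
    rw [show a + (i + 1) = a + i + 1 by omega]
    rcases hadj with ⟨hf, -⟩ | ⟨-, -, -, hd⟩
    · rw [hf, dist_self]; positivity
    · exact le_trans hd (pow_le_pow_right₀ (by norm_num) hDi)
  obtain ⟨w, hwlen⟩ := hop l (j - a) (fun i => (p.getVert (a + i)).1) hypH
  have hEnd : (((fun i => (p.getVert (a + i)).1) (j - a) : X), l + 1) = p.getVert (j + 1) := by
    simp only
    rw [show a + (j - a) = j by omega, hfst, ← hDj1']
  have adjUp : (horoball X).Adj (p.getVert a) ((p.getVert a).1, l + 1) :=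
    Or.inl ⟨rfl, Or.inl (by omega)⟩
  refine ⟨(wtake p a).append (SimpleGraph.Walk.cons adjUp
    ((w.copy rfl hEnd).append (wdrop p (j + 1)))), ?_⟩
  simp only [SimpleGraph.Walk.length_append, SimpleGraph.Walk.length_cons,
    SimpleGraph.Walk.length_copy, length_wtake, length_wdrop]
  omega

end HoroAux


/-- If a geodesic edge-path in the combinatorial horoball over a 1-discrete
metric space contains a (maximal) horizontal segment, from position `a` to
position `b`, whose depth is strictly less than the depth of some horizontal
edge of the path, then that horizontal segment has length exactly 1. -/
theorem stmt0 {X : Type*} [MetricSpace X]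
    (hdisc : ∀ x y : X, x ≠ y → 1 ≤ dist x y)
    {u v : X × ℕ} (p : (horoball X).Walk u v)
    (hgeo : p.length = (horoball X).dist u v)
    (a b : ℕ) (hab : a < b) (hb : b ≤ p.length)
    (hhor : ∀ m, a ≤ m → m < b → (p.getVert m).2 = (p.getVert (m + 1)).2)
    (hmaxl : a = 0 ∨ (p.getVert (a - 1)).2 ≠ (p.getVert a).2)
    (hmaxr : b = p.length ∨ (p.getVert b).2 ≠ (p.getVert (b + 1)).2)
    (hdeep : ∃ m, m < p.length ∧ (p.getVert m).2 = (p.getVert (m + 1)).2 ∧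
      (p.getVert a).2 < (p.getVert m).2) :
    b = a + 1 := by
  by_contra hne
  have hab2 : a + 2 ≤ b := by omega
  obtain ⟨m, hm1, hm2, hm3⟩ := hdeep
  -- depth is constant `= (p.getVert a).2` on `[a, b]`
  have hchain : ∀ d, a + d ≤ b → (p.getVert (a + d)).2 = (p.getVert a).2 := by
    intro d
    induction d with
    | zero => intro _; rfl
    | succ d ihd =>
      intro hdb
      have h1 := hhor (a + d) (by omega) (by omega)
      have h2 := ihd (by omega)
      rw [show a + (d + 1) = a + d + 1 by omega]
      omega
  have hq : ∃ q : (horoball X).Walk u v, q.length < p.length := by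
    rcases le_or_gt b m with hcase | hcase
    · exact HoroAux.shortcut p a b m hab2 hcase (le_of_lt hm1) hhor hm3
    · -- m < b; in fact m < a since depth on [a,b] equals (p.getVert a).2
      have hma : m < a := by
        by_contra hc
        have := hchain (m - a) (by omega)
        rw [show a + (m - a) = m by omega] at this
        omega
      -- work with the reversed walk
      obtain ⟨q, hq⟩ := HoroAux.shortcut p.reverse (p.length - b) (p.length - a)
        (p.length - m) (by omega) (by omega)
        (by rw [SimpleGraph.Walk.length_reverse]; omega)
        (by
          intro i h1 h2
          rw [SimpleGraph.Walk.getVert_reverse, SimpleGraph.Walk.getVert_reverse]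
          have h3 := hhor (p.length - i - 1) (by omega) (by omega)
          rw [show p.length - i - 1 + 1 = p.length - i by omega] at h3
          rw [show p.length - (i + 1) = p.length - i - 1 by omega]
          omega)
        (by
          rw [SimpleGraph.Walk.getVert_reverse, SimpleGraph.Walk.getVert_reverse]
          rw [show p.length - (p.length - b) = b by omega,
            show p.length - (p.length - m) = m by omega]
          have := hchain (b - a) (by omega)
          rw [show a + (b - a) = b by omega] at this
          omega)
      refine ⟨q.reverse, ?_⟩
      rw [SimpleGraph.Walk.length_reverse]
      rw [SimpleGraph.Walk.length_reverse] at hq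
      exact hq
  obtain ⟨q, hq⟩ := hq
  have := SimpleGraph.dist_le q
  omega
end

section
/- In a combinatorial horoball, the horizontal segment in any normal geodesic has length at most 5. Moreover, any geodesic between two vertices lies within Hausdorff distance 4 of a normal geodesic with the same endpoints. -/
/-- A walk `q` is in normal form with horizontal part from position `a` to `b`:
it consists of a vertical segment, then a single horizontal segment, then a
vertical segment. -/
def NormalAt {X : Type*} [MetricSpace X] {u v : X × ℕ}
    (q : (horoball X).Walk u v) (a b : ℕ) : Prop :=
  a ≤ b ∧ b ≤ q.length ∧
    (∀ m, m < a → (q.getVert m).1 = (q.getVert (m + 1)).1) ∧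
    (∀ m, a ≤ m → m < b → (q.getVert m).2 = (q.getVert (m + 1)).2) ∧
    (∀ m, b ≤ m → m < q.length → (q.getVert m).1 = (q.getVert (m + 1)).1)

namespace HoroAux
open SimpleGraph Walk

variable {X : Type*} [MetricSpace X]

/-- number of horizontal edges of a walk in the horoball -/
def numH : {u v : X × ℕ} → (horoball X).Walk u v → ℕ
  | _, _, Walk.nil => 0
  | _, _, Walk.cons (u := a) (v := b) _ q => (if a.2 = b.2 then 1 else 0) + numH q

@[simp] lemma numH_nil {u : X × ℕ} : numH (Walk.nil : (horoball X).Walk u u) = 0 := rfl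

@[simp] lemma numH_cons {u w v : X × ℕ} (h : (horoball X).Adj u w) (q : (horoball X).Walk w v) :
    numH (Walk.cons h q) = (if u.2 = w.2 then 1 else 0) + numH q := rfl

lemma numH_le_length {u v : X × ℕ} (p : (horoball X).Walk u v) : numH p ≤ p.length := by
  induction p with
  | nil => simp
  | cons h q ih => simp only [numH_cons, Walk.length_cons]; split <;> omega

lemma numH_append {u v w : X × ℕ} (p : (horoball X).Walk u v) (q : (horoball X).Walk v w) :
    numH (p.append q) = numH p + numH q := by
  induction p with
  | nil => simp
  | cons h p ih => simp [Walk.cons_append, numH_cons, ih]; omega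

lemma numH_reverse {u v : X × ℕ} (p : (horoball X).Walk u v) : numH p.reverse = numH p := by
  induction p with
  | nil => simp
  | cons h p ih =>
      rw [Walk.reverse_cons, numH_append, ih, numH_cons]
      simp only [numH_cons, numH_nil]
      split_ifs <;> omega

/-- per-edge variation of depth -/
lemma depth_bound {u v : X × ℕ} (p : (horoball X).Walk u v) :
    v.2 + numH p ≤ u.2 + p.length ∧ u.2 + numH p ≤ v.2 + p.length := by
  induction p with
  | nil => simp
  | cons h p ih =>
      rename_i a b
      simp only [numH_cons, Walk.length_cons]
      rcases h with ⟨h1, h2⟩ | ⟨h1, h2, h3, h4⟩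
      · rw [if_neg (by omega)]
        omega
      · rw [if_pos h1]
        omega

lemma getVert_mem_support {u v : X × ℕ} (p : (horoball X).Walk u v) (i : ℕ) :
    p.getVert i ∈ p.support := by
  induction p generalizing i with
  | nil => simp [Walk.getVert]
  | cons h p ih =>
      cases i with
      | zero => simp [Walk.getVert_zero]
      | succ i => rw [Walk.getVert_cons_succ]; simp [Walk.support_cons]

lemma exists_depth_one_of_numH_pos {u v : X × ℕ} (p : (horoball X).Walk u v)
    (h : numH p ≠ 0) : ∃ c ∈ p.support, 1 ≤ c.2 := by
  induction p with
  | nil => simp at h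
  | cons ha p ih =>
      rename_i s a b
      by_cases hab : s.2 = a.2
      · rcases ha with ⟨h1, h2⟩ | ⟨h1, h2, h3, h4⟩
        · omega
        · exact ⟨s, Walk.start_mem_support _, h2⟩
      · rw [numH_cons, if_neg hab, zero_add] at h
        obtain ⟨c, hc, hc1⟩ := ih h
        exact ⟨c, by simp [Walk.support_cons]; right; exact hc, hc1⟩

lemma exists_depth_one_of_length_pos {u v : X × ℕ} (p : (horoball X).Walk u v)
    (h : p.length ≠ 0) : ∃ c ∈ p.support, 1 ≤ c.2 := by
  cases p with
  | nil => simp at h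
  | cons ha p =>
      rename_i b
      rcases id ha with ⟨h1, h2 | h2⟩ | ⟨h1, h2, h3, h4⟩
      · exact ⟨b, by simp [Walk.support_cons, Walk.start_mem_support], by omega⟩
      · exact ⟨_, Walk.start_mem_support _, by omega⟩
      · exact ⟨_, Walk.start_mem_support _, h2⟩

/-- coordinate distance bound -/
lemma coordDist {u v : X × ℕ} (p : (horoball X).Walk u v) (D : ℕ)
    (hD : ∀ c ∈ p.support, c.2 ≤ D) :
    dist u.1 v.1 ≤ (numH p : ℝ) * 2 ^ D := by
  induction p with
  | nil => simp
  | cons ha p ih =>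
      rename_i s a b
      have hb : ∀ c ∈ p.support, c.2 ≤ D := fun c hc => hD c (by simp [Walk.support_cons]; right; exact hc)
      have ihb := ih hb
      have hpow : (0:ℝ) < 2 ^ D := by positivity
      rcases id ha with ⟨h1, h2⟩ | ⟨h1, h2, h3, h4⟩
      · rw [numH_cons, if_neg (by omega), h1]
        push_cast
        linarith [ihb]
      · have haD : s.2 ≤ D := hD s (Walk.start_mem_support _)
        have h2D : (2:ℝ) ^ s.2 ≤ 2 ^ D := by
          apply pow_le_pow_right₀ (by norm_num) haD
        rw [numH_cons, if_pos h1]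
        have htri := dist_triangle s.1 a.1 b.1
        push_cast
        nlinarith [ihb]

/-- exists maximal-depth vertex -/
lemma exists_max_depth {u v : X × ℕ} (p : (horoball X).Walk u v) :
    ∃ c ∈ p.support, ∀ c' ∈ p.support, c'.2 ≤ c.2 := by
  induction p with
  | nil =>
      rename_i w
      exact ⟨w, by simp, by simp⟩
  | cons ha p ih =>
      rename_i s a b
      obtain ⟨c, hc, hmax⟩ := ih
      by_cases hac : s.2 ≤ c.2
      · refine ⟨c, by simp [Walk.support_cons]; right; exact hc, ?_⟩
        intro c' hc'
        rw [Walk.support_cons] at hc'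
        rcases List.mem_cons.mp hc' with rfl | hc'
        · exact hac
        · exact hmax c' hc'
      · refine ⟨s, Walk.start_mem_support _, ?_⟩
        intro c' hc'
        rw [Walk.support_cons] at hc'
        rcases List.mem_cons.mp hc' with rfl | hc'
        · exact le_refl _
        · exact le_trans (hmax c' hc') (by omega)

lemma adjH {w w' : X} {t : ℕ} (ht : 1 ≤ t) (h0 : w ≠ w') (h2 : dist w w' ≤ 2 ^ t) :
    (horoball X).Adj (w, t) (w', t) :=
  Or.inr ⟨rfl, ht, dist_pos.mpr h0, h2⟩

lemma vert_up (w : X) (a d : ℕ) :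
    ∃ P : (horoball X).Walk (w, a) (w, a + d), P.length = d ∧
      ∀ c, c ∈ P.support ↔ (c.1 = w ∧ a ≤ c.2 ∧ c.2 ≤ a + d) := by
  induction d with
  | zero =>
      refine ⟨Walk.nil, rfl, fun c => ?_⟩
      simp only [Walk.support_nil, List.mem_singleton]
      constructor
      · rintro rfl; exact ⟨rfl, le_refl _, le_refl _⟩
      · rintro ⟨h1, h2, h3⟩
        have : c.2 = a := by omega
        rw [← h1, ← this]
  | succ d ih =>
      obtain ⟨P, hlen, hsupp⟩ := ih
      have hadj : (horoball X).Adj (w, a + d) (w, a + (d+1)) := Or.inl ⟨rfl, Or.inl rfl⟩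
      refine ⟨P.append (Walk.cons hadj Walk.nil), by simp [hlen], fun c => ?_⟩
      rw [Walk.support_append]
      simp only [Walk.support_cons, Walk.support_nil, List.tail_cons, List.mem_append,
        List.mem_singleton, hsupp]
      constructor
      · rintro (⟨h1, h2, h3⟩ | rfl)
        · exact ⟨h1, h2, by omega⟩
        · exact ⟨rfl, by omega, le_refl _⟩
      · rintro ⟨h1, h2, h3⟩
        by_cases hc : c.2 ≤ a + d
        · exact Or.inl ⟨h1, h2, hc⟩
        · right
          have : c.2 = a + (d+1) := by omega
          rw [← h1, ← this]

lemma vert_walk (w : X) (a b : ℕ) :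
    ∃ P : (horoball X).Walk (w, a) (w, b), P.length = (a - b) + (b - a) ∧
      ∀ c, c ∈ P.support ↔ (c.1 = w ∧ ((a ≤ c.2 ∧ c.2 ≤ b) ∨ (b ≤ c.2 ∧ c.2 ≤ a))) := by
  rcases le_total a b with hab | hab
  · obtain ⟨d, rfl⟩ := le_iff_exists_add.mp hab
    obtain ⟨P, hlen, hsupp⟩ := vert_up w a d
    refine ⟨P, by omega, fun c => ?_⟩
    rw [hsupp c]
    constructor
    · rintro ⟨h1, h2, h3⟩; exact ⟨h1, Or.inl ⟨h2, h3⟩⟩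
    · rintro ⟨h1, ⟨h2, h3⟩ | ⟨h2, h3⟩⟩ <;> exact ⟨h1, by omega, by omega⟩
  · obtain ⟨d, rfl⟩ := le_iff_exists_add.mp hab
    obtain ⟨P, hlen, hsupp⟩ := vert_up w b d
    refine ⟨P.reverse, by rw [Walk.length_reverse, hlen]; omega, fun c => ?_⟩
    rw [Walk.support_reverse, List.mem_reverse, hsupp c]
    constructor
    · rintro ⟨h1, h2, h3⟩; exact ⟨h1, Or.inr ⟨h2, h3⟩⟩
    · rintro ⟨h1, ⟨h2, h3⟩ | ⟨h2, h3⟩⟩ <;> exact ⟨h1, by omega, by omega⟩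

lemma hstep {w w' : X} {E : ℕ} (hE : 1 ≤ E) (hd : dist w w' ≤ 2 ^ E) :
    ∃ P : (horoball X).Walk (w, E) (w', E), P.length ≤ 1 ∧ ∀ c ∈ P.support, c.2 = E := by
  by_cases hww : w = w'
  · subst hww
    exact ⟨Walk.nil, by simp, by simp⟩
  · refine ⟨Walk.cons (adjH hE hww hd) Walk.nil, by simp, ?_⟩
    intro c hc
    simp only [Walk.support_cons, Walk.support_nil, List.mem_cons, List.mem_singleton,
      List.not_mem_nil, or_false] at hc
    rcases hc with rfl | rfl <;> rfl

/-- push all horizontal edges of a walk to a fixed deep level `E` -/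
lemma lift1 {u v : X × ℕ} (p : (horoball X).Walk u v) (E : ℕ) (hE : 1 ≤ E)
    (hdep : ∀ c ∈ p.support, c.2 ≤ E) :
    ∃ R : (horoball X).Walk (u.1, E) (v.1, E),
      R.length = numH p ∧
      (∀ c ∈ R.support, c.2 = E) ∧
      (∀ c ∈ p.support, ∃ c' ∈ R.support, c'.1 = c.1) ∧
      (∀ c ∈ R.support, c.1 = u.1 ∨
        ∃ (d1 d2 : X × ℕ) (hd : (horoball X).Adj d1 d2) (P₁ : (horoball X).Walk u d1)
          (P₂ : (horoball X).Walk d2 v),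
          p = P₁.append (Walk.cons hd P₂) ∧ d2.1 = c.1 ∧ d1.2 = d2.2) := by
  induction p with
  | nil =>
      rename_i w
      refine ⟨Walk.nil, rfl, by simp, ?_, by simp⟩
      intro c hc
      simp only [Walk.support_nil, List.mem_singleton] at hc
      subst hc
      exact ⟨(c.1, E), by simp, rfl⟩
  | cons ha p ih =>
      rename_i s a b
      have hdep' : ∀ c ∈ p.support, c.2 ≤ E := fun c hc =>
        hdep c (by simp [Walk.support_cons]; right; exact hc)
      obtain ⟨R', hlen', hdepR', hcov', hsplit'⟩ := ih hdep'
      by_cases hsa : s.2 = a.2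
      · -- horizontal edge
        have hadj : 0 < dist s.1 a.1 ∧ dist s.1 a.1 ≤ 2 ^ s.2 := by
          rcases ha with ⟨h1, h2⟩ | ⟨h1, h2, h3, h4⟩
          · omega
          · exact ⟨h3, h4⟩
        have hsE : s.2 ≤ E := hdep s (Walk.start_mem_support _)
        have hne : s.1 ≠ a.1 := fun h => by rw [h] at hadj; simp at hadj
        have hdE : dist s.1 a.1 ≤ 2 ^ E :=
          le_trans hadj.2 (pow_le_pow_right₀ (by norm_num) hsE)
        refine ⟨Walk.cons (adjH hE hne hdE) R', by simp [hlen', if_pos hsa]; omega, ?_, ?_, ?_⟩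
        · intro c hc
          rw [Walk.support_cons] at hc
          rcases List.mem_cons.mp hc with rfl | hc
          · rfl
          · exact hdepR' c hc
        · intro c hc
          rw [Walk.support_cons] at hc
          rcases List.mem_cons.mp hc with rfl | hc
          · exact ⟨(c.1, E), Walk.start_mem_support _, rfl⟩
          · obtain ⟨c', hc', hcc⟩ := hcov' c hc
            exact ⟨c', by simp [Walk.support_cons]; right; exact hc', hcc⟩
        · intro c hc
          rw [Walk.support_cons] at hc
          rcases List.mem_cons.mp hc with rfl | hc
          · exact Or.inl rfl
          · right
            rcases hsplit' c hc with hca | ⟨d1, d2, hd, P₁, P₂, heq, h1, h2⟩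
            · exact ⟨s, a, ha, Walk.nil, p, by simp, hca.symm, hsa⟩
            · exact ⟨d1, d2, hd, Walk.cons ha P₁, P₂, by rw [Walk.cons_append, heq], h1, h2⟩
      · -- vertical edge
        have hcoords : s.1 = a.1 := by
          rcases ha with ⟨h1, h2⟩ | ⟨h1, h2, h3, h4⟩
          · exact h1
          · omega
        refine ⟨R'.copy (by rw [hcoords]) rfl, ?_, ?_, ?_, ?_⟩
        · rw [Walk.length_copy, hlen', numH_cons, if_neg hsa, zero_add]
        · intro c hc
          rw [Walk.support_copy] at hc
          exact hdepR' c hc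
        · intro c hc
          rw [Walk.support_cons] at hc
          rcases List.mem_cons.mp hc with rfl | hc
          · refine ⟨(a.1, E), ?_, hcoords.symm⟩
            rw [Walk.support_copy]
            exact Walk.start_mem_support _
          · obtain ⟨c', hc', hcc⟩ := hcov' c hc
            rw [← Walk.support_copy R' (by rw [hcoords] : ((a.1 : X), E) = (s.1, E)) rfl] at hc'
            exact ⟨c', hc', hcc⟩
        · intro c hc
          rw [Walk.support_copy] at hc
          rcases hsplit' c hc with hca | ⟨d1, d2, hd, P₁, P₂, heq, h1, h2⟩
          · exact Or.inl (hca.trans hcoords.symm)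
          · exact Or.inr ⟨d1, d2, hd, Walk.cons ha P₁, P₂, by rw [Walk.cons_append, heq], h1, h2⟩

/-- push horizontal edges to level `F+1`, merging them in pairs -/
lemma lift3aux : ∀ (n : ℕ) {u v : X × ℕ} (p : (horoball X).Walk u v), p.length ≤ n →
    ∀ (F : ℕ), (∀ c ∈ p.support, c.2 ≤ F) →
    (∃ R : (horoball X).Walk (u.1, F+1) (v.1, F+1), 2 * R.length ≤ numH p + 1) ∧
    (∀ z : X, dist z u.1 ≤ 2 ^ F →
      ∃ R : (horoball X).Walk (z, F+1) (v.1, F+1), 2 * R.length ≤ numH p + 2) := by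
  intro n
  induction n with
  | zero =>
      intro u v p hlen F hdep
      cases p with
      | nil =>
          constructor
          · exact ⟨Walk.nil, by simp⟩
          · intro z hz
            obtain ⟨R, hR, -⟩ := hstep (E := F+1) (by omega)
              (le_trans hz (pow_le_pow_right₀ (by norm_num) (by omega)))
            exact ⟨R, by omega⟩
      | cons ha p' => simp at hlen
  | succ n ih =>
      intro u v p hlen F hdep
      cases p with
      | nil =>
          constructor
          · exact ⟨Walk.nil, by simp⟩
          · intro z hz
            obtain ⟨R, hR, -⟩ := hstep (E := F+1) (by omega)
              (le_trans hz (pow_le_pow_right₀ (by norm_num) (by omega)))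
            exact ⟨R, by omega⟩
      | cons ha p' =>
          rename_i a
          have hlen' : p'.length ≤ n := by simp [Walk.length_cons] at hlen; omega
          have hdep' : ∀ c ∈ p'.support, c.2 ≤ F := fun c hc =>
            hdep c (by simp [Walk.support_cons]; right; exact hc)
          have ihp := ih p' hlen' F hdep'
          by_cases hsa : u.2 = a.2
          · -- horizontal
            have hadj : 0 < dist u.1 a.1 ∧ dist u.1 a.1 ≤ 2 ^ u.2 := by
              rcases ha with ⟨h1, h2⟩ | ⟨h1, h2, h3, h4⟩
              · omega
              · exact ⟨h3, h4⟩
            have huF : u.2 ≤ F := hdep u (Walk.start_mem_support _)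
            have hdF : dist u.1 a.1 ≤ 2 ^ F :=
              le_trans hadj.2 (pow_le_pow_right₀ (by norm_num) huF)
            constructor
            · obtain ⟨R, hR⟩ := ihp.2 u.1 hdF
              exact ⟨R, by rw [numH_cons, if_pos hsa]; omega⟩
            · intro z hz
              have hza : dist z a.1 ≤ 2 ^ (F+1) := by
                calc dist z a.1 ≤ dist z u.1 + dist u.1 a.1 := dist_triangle _ _ _
                _ ≤ 2^F + 2^F := by linarith
                _ = 2^(F+1) := by ring
              obtain ⟨W₀, hW₀, -⟩ := hstep (E := F+1) (by omega) hza
              obtain ⟨R', hR'⟩ := ihp.1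
              exact ⟨W₀.append R', by
                rw [Walk.length_append, numH_cons, if_pos hsa]; omega⟩
          · -- vertical
            have hcoords : u.1 = a.1 := by
              rcases ha with ⟨h1, h2⟩ | ⟨h1, h2, h3, h4⟩
              · exact h1
              · omega
            constructor
            · obtain ⟨R, hR⟩ := ihp.1
              refine ⟨R.copy (by rw [hcoords]) rfl, ?_⟩
              rw [Walk.length_copy, numH_cons, if_neg hsa]
              omega
            · intro z hz
              rw [hcoords] at hz
              obtain ⟨R, hR⟩ := ihp.2 z hz
              refine ⟨R, ?_⟩
              rw [numH_cons, if_neg hsa]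
              omega

lemma lift3 {u v : X × ℕ} (p : (horoball X).Walk u v) (F : ℕ)
    (hdep : ∀ c ∈ p.support, c.2 ≤ F) :
    ∃ R : (horoball X).Walk (u.1, F+1) (v.1, F+1), 2 * R.length ≤ numH p + 1 :=
  (lift3aux p.length p (le_refl _) F hdep).1

/-- split a walk at the first vertex of depth τ -/
lemma ivt : ∀ {u v : X × ℕ} (p : (horoball X).Walk u v) (τ : ℕ), u.2 ≤ τ →
    (∃ c ∈ p.support, τ ≤ c.2) →
    ∃ (c : X × ℕ) (P₁ : (horoball X).Walk u c) (P₂ : (horoball X).Walk c v),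
      p = P₁.append P₂ ∧ c.2 = τ ∧ ∀ c' ∈ P₁.support, c'.2 ≤ τ := by
  intro u v p
  induction p with
  | nil =>
      rename_i w
      intro τ h1 h2
      obtain ⟨c, hc, hcτ⟩ := h2
      simp only [Walk.support_nil, List.mem_singleton] at hc
      subst hc
      refine ⟨c, Walk.nil, Walk.nil, by simp, by omega, ?_⟩
      intro c' hc'
      simp only [Walk.support_nil, List.mem_singleton] at hc'
      subst hc'
      omega
  | cons ha p ihp =>
      rename_i s a b
      intro τ h1 h2
      by_cases hs : s.2 = τ
      · exact ⟨s, Walk.nil, Walk.cons ha p, by simp, hs, by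
          intro c' hc'
          simp only [Walk.support_nil, List.mem_singleton] at hc'
          subst hc'
          omega⟩
      · have hsτ : s.2 < τ := by omega
        have ha2 : a.2 ≤ τ := by
          rcases ha with ⟨g1, g2⟩ | ⟨g1, g2, g3, g4⟩ <;> omega
        have h2' : ∃ c ∈ p.support, τ ≤ c.2 := by
          obtain ⟨c, hc, hcτ⟩ := h2
          rw [Walk.support_cons] at hc
          rcases List.mem_cons.mp hc with rfl | hc
          · omega
          · exact ⟨c, hc, hcτ⟩
        obtain ⟨c, P₁, P₂, heq, hcτ, hP₁⟩ := ihp τ ha2 h2'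
        refine ⟨c, Walk.cons ha P₁, P₂, by rw [Walk.cons_append, heq], hcτ, ?_⟩
        intro c' hc'
        rw [Walk.support_cons] at hc'
        rcases List.mem_cons.mp hc' with rfl | hc'
        · omega
        · exact hP₁ c' hc'

lemma key_eq {u v : X × ℕ} (p : (horoball X).Walk u v)
    (hgeo : p.length = (horoball X).dist u v) {L : ℕ}
    (hL : ∀ c ∈ p.support, c.2 ≤ L) (hatt : ∃ c ∈ p.support, c.2 = L) :
    p.length + u.2 + v.2 = 2 * L + numH p := by
  have hh : u.2 ≤ L := hL _ (Walk.start_mem_support _)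
  have hk : v.2 ≤ L := hL _ (Walk.end_mem_support _)
  obtain ⟨c, hc, hcL⟩ := hatt
  obtain ⟨P₁, P₂, hpeq⟩ := (Walk.mem_support_iff_exists_append).mp hc
  have hlen : p.length = P₁.length + P₂.length := by rw [hpeq, Walk.length_append]
  have hm : numH p = numH P₁ + numH P₂ := by rw [hpeq, numH_append]
  have d1 := (depth_bound P₁).1
  have d2 := (depth_bound P₂).2
  rw [hcL] at d1 d2
  by_cases hp0 : p.length = 0
  · have := numH_le_length p
    omega
  · have hL1 : 1 ≤ L := by
      obtain ⟨c₁, hc₁, h1c⟩ := exists_depth_one_of_length_pos p hp0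
      exact le_trans h1c (hL _ hc₁)
    obtain ⟨R, hRlen, -, -, -⟩ := lift1 p L hL1 hL
    obtain ⟨V₁, hV₁, -⟩ := vert_walk u.1 u.2 L
    obtain ⟨V₂, hV₂, -⟩ := vert_walk v.1 L v.2
    have hWle : (horoball X).dist u v ≤ (V₁.append (R.append V₂)).length :=
      SimpleGraph.dist_le _
    rw [Walk.length_append, Walk.length_append] at hWle
    omega

lemma kasc {u v : X × ℕ} (p : (horoball X).Walk u v)
    (hgeo : p.length = (horoball X).dist u v) {L : ℕ}
    (hL : ∀ c ∈ p.support, c.2 ≤ L) {w : X} {t : ℕ}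
    {P₁ : (horoball X).Walk u (w, t)} {P₂ : (horoball X).Walk (w, t) v}
    (hsp : p = P₁.append P₂) (hatt₂ : ∃ c ∈ P₂.support, c.2 = L) (ht : t < L) :
    (∀ c ∈ P₁.support, c.2 ≤ t) ∧ numH P₁ ≤ 1 ∧ dist u.1 w ≤ 2 ^ t := by
  have hattp : ∃ c ∈ p.support, c.2 = L := by
    obtain ⟨c, hc, hcL⟩ := hatt₂
    exact ⟨c, by rw [hsp, Walk.mem_support_append_iff]; right; exact hc, hcL⟩
  have hkey := key_eq p hgeo hL hattp
  have hlen12 : p.length = P₁.length + P₂.length := by rw [hsp, Walk.length_append]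
  have hm12 : numH p = numH P₁ + numH P₂ := by rw [hsp, numH_append]
  have hwt2 : ((w, t) : X × ℕ).2 = t := rfl
  have ha : ∀ c ∈ P₁.support, c.2 ≤ t := by
    intro c₁ hc₁
    obtain ⟨A, B, hABeq⟩ := (Walk.mem_support_iff_exists_append).mp hc₁
    obtain ⟨c₂, hc₂, hc₂L⟩ := hatt₂
    obtain ⟨C, D, hCDeq⟩ := (Walk.mem_support_iff_exists_append).mp hc₂
    have dA := (depth_bound A).1
    have dB := (depth_bound B).2
    have dC := (depth_bound C).1
    have dD := (depth_bound D).2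
    rw [hwt2] at dB dC
    rw [hc₂L] at dC dD
    have e1 : P₁.length = A.length + B.length := by rw [hABeq, Walk.length_append]
    have e2 : numH P₁ = numH A + numH B := by rw [hABeq, numH_append]
    have e3 : P₂.length = C.length + D.length := by rw [hCDeq, Walk.length_append]
    have e4 : numH P₂ = numH C + numH D := by rw [hCDeq, numH_append]
    omega
  have hL1 : 1 ≤ L := by omega
  have hL11 : L - 1 + 1 = L := by omega
  have hh : u.2 ≤ L := hL _ (Walk.start_mem_support _)
  have hk : v.2 ≤ L := hL _ (Walk.end_mem_support _)
  refine ⟨ha, ?_, ?_⟩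
  · -- numH P₁ ≤ 1
    obtain ⟨R₁, hR₁len⟩ := lift3 P₁ (L - 1) (fun c hc => by have := ha c hc; omega)
    obtain ⟨R₂, hR₂len, -, -, -⟩ := lift1 P₂ L hL1 (fun c hc =>
      hL c (by rw [hsp, Walk.mem_support_append_iff]; right; exact hc))
    obtain ⟨V₁, hV₁, -⟩ := vert_walk u.1 u.2 L
    obtain ⟨V₂, hV₂, -⟩ := vert_walk v.1 L v.2
    have hcast : ((u.1 : X), L - 1 + 1) = (u.1, L) := by rw [hL11]
    have hcast2 : ((w : X), L - 1 + 1) = (w, L) := by rw [hL11]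
    have hWle : (horoball X).dist u v ≤
        (V₁.append ((R₁.copy hcast hcast2).append (R₂.append V₂))).length :=
      SimpleGraph.dist_le _
    rw [Walk.length_append, Walk.length_append, Walk.length_append, Walk.length_copy] at hWle
    omega
  · -- coordinate bound
    have hcd := coordDist P₁ t ha
    have hm1 : numH P₁ ≤ 1 := by
      obtain ⟨R₁, hR₁len⟩ := lift3 P₁ (L - 1) (fun c hc => by have := ha c hc; omega)
      obtain ⟨R₂, hR₂len, -, -, -⟩ := lift1 P₂ L hL1 (fun c hc =>
        hL c (by rw [hsp, Walk.mem_support_append_iff]; right; exact hc))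
      obtain ⟨V₁, hV₁, -⟩ := vert_walk u.1 u.2 L
      obtain ⟨V₂, hV₂, -⟩ := vert_walk v.1 L v.2
      have hcast : ((u.1 : X), L - 1 + 1) = (u.1, L) := by rw [hL11]
      have hcast2 : ((w : X), L - 1 + 1) = (w, L) := by rw [hL11]
      have hWle : (horoball X).dist u v ≤
          (V₁.append ((R₁.copy hcast hcast2).append (R₂.append V₂))).length :=
        SimpleGraph.dist_le _
      rw [Walk.length_append, Walk.length_append, Walk.length_append, Walk.length_copy] at hWle
      omega
    have hcast : (numH P₁ : ℝ) ≤ 1 := by exact_mod_cast hm1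
    have hpow : (0:ℝ) < 2 ^ t := by positivity
    nlinarith [hcd]

lemma step_dist {z : X} {c : X × ℕ} (hd : dist c.1 z ≤ 2 ^ c.2)
    (ht : c.1 ≠ z → 1 ≤ c.2) : (horoball X).dist c (z, c.2) ≤ 1 := by
  by_cases hc : c.1 = z
  · have : ((z, c.2) : X × ℕ) = c := by rw [← hc]
    rw [this, SimpleGraph.dist_self]
    omega
  · have hadj : (horoball X).Adj (c.1, c.2) (z, c.2) := adjH (ht hc) hc hd
    have := SimpleGraph.dist_le (Walk.cons hadj Walk.nil)
    simpa using this

lemma two_step {z w₀ : X} {L : ℕ} (hL1 : 1 ≤ L) (hd : dist z w₀ ≤ 2 ^ L) :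
    (horoball X).dist ((z, L) : X × ℕ) (w₀, L - 1) ≤ 2 := by
  have hvadj : (horoball X).Adj (w₀, L) (w₀, L - 1) := Or.inl ⟨rfl, Or.inr (by omega)⟩
  by_cases hzw : z = w₀
  · subst hzw
    have := SimpleGraph.dist_le (Walk.cons hvadj Walk.nil)
    simp at this
    omega
  · have hadj : (horoball X).Adj (z, L) (w₀, L) := adjH hL1 hzw hd
    have := SimpleGraph.dist_le (Walk.cons hadj (Walk.cons hvadj Walk.nil))
    simpa using this

lemma find_near {u v : X × ℕ} (p : (horoball X).Walk u v)
    (hgeo : p.length = (horoball X).dist u v) {L : ℕ}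
    (hL : ∀ c ∈ p.support, c.2 ≤ L) (hatt : ∃ c ∈ p.support, c.2 = L)
    (hhL : u.2 + 1 ≤ L) :
    ∃ w₀ : X, ((w₀, L - 1) : X × ℕ) ∈ p.support ∧ dist u.1 w₀ ≤ 2 ^ (L - 1) := by
  obtain ⟨cM, hcM, hcML⟩ := hatt
  obtain ⟨c, P₁, P₂, hpeq, hcτ, hdep₁⟩ := ivt p (L - 1) (by omega)
    ⟨cM, hcM, by omega⟩
  have hcMP₂ : cM ∈ P₂.support := by
    rw [hpeq, Walk.mem_support_append_iff] at hcM
    rcases hcM with h | h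
    · have := hdep₁ cM h
      omega
    · exact h
  obtain ⟨-, -, hdist⟩ := kasc p hgeo hL hpeq ⟨cM, hcMP₂, hcML⟩ (show c.2 < L by omega)
  refine ⟨c.1, ?_, by rw [← hcτ]; exact hdist⟩
  have hc : c = (c.1, L - 1) := by rw [← hcτ]
  rw [← hc, hpeq, Walk.mem_support_append_iff]
  exact Or.inl (Walk.end_mem_support _)

lemma near_x {u v : X × ℕ} (p : (horoball X).Walk u v)
    (hgeo : p.length = (horoball X).dist u v) {L : ℕ}
    (hL : ∀ c ∈ p.support, c.2 ≤ L) (hatt : ∃ c ∈ p.support, c.2 = L)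
    {τ : ℕ} (hhτ : u.2 ≤ τ) (hτL : τ ≤ L) :
    ∃ c ∈ p.support, (horoball X).dist ((u.1, τ) : X × ℕ) c ≤ 2 := by
  by_cases hτu : τ = u.2
  · refine ⟨u, Walk.start_mem_support _, ?_⟩
    have : ((u.1, τ) : X × ℕ) = u := by rw [hτu]
    rw [this, SimpleGraph.dist_self]
    omega
  · by_cases hτL' : τ < L
    · obtain ⟨cM, hcM, hcML⟩ := hatt
      obtain ⟨c, P₁, P₂, hpeq, hcτ, hdep₁⟩ := ivt p τ hhτ ⟨cM, hcM, by omega⟩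
      have hcMP₂ : cM ∈ P₂.support := by
        rw [hpeq, Walk.mem_support_append_iff] at hcM
        rcases hcM with h | h
        · have := hdep₁ cM h
          omega
        · exact h
      obtain ⟨-, hm1, hdist⟩ := kasc p hgeo hL hpeq ⟨cM, hcMP₂, hcML⟩ (by omega)
      refine ⟨c, by rw [hpeq, Walk.mem_support_append_iff]; exact Or.inl (Walk.end_mem_support _), ?_⟩
      have hstep : (horoball X).dist c (u.1, c.2) ≤ 1 := by
        apply step_dist
        · rw [_root_.dist_comm]
          exact hdist
        · intro hne
          have hnum : numH P₁ ≠ 0 := by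
            intro h0
            have := coordDist P₁ τ (fun c' hc' => by have := hdep₁ c' hc'; omega)
            rw [h0] at this
            simp at this
            have hz : dist u.1 c.1 ≤ 0 := by simpa using this
            exact hne (dist_le_zero.mp hz).symm
          obtain ⟨c', hc', h1c'⟩ := exists_depth_one_of_numH_pos P₁ hnum
          have := hdep₁ c' hc'
          omega
      rw [SimpleGraph.dist_comm, ← hcτ]
      omega
    · have hτL2 : τ = L := by omega
      rw [hτL2]
      obtain ⟨w₀, hmem, hd⟩ := find_near p hgeo hL hatt (by omega)
      refine ⟨(w₀, L - 1), hmem, ?_⟩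
      apply le_trans (two_step (by omega) (le_trans hd (pow_le_pow_right₀ (by norm_num) (by omega))))
      omega

lemma numH_le_five {u v : X × ℕ} (p : (horoball X).Walk u v)
    (hgeo : p.length = (horoball X).dist u v) : numH p ≤ 5 := by
  obtain ⟨cM, hcM, hmax⟩ := exists_max_depth p
  have hkey := key_eq p hgeo hmax ⟨cM, hcM, rfl⟩
  by_cases hp0 : p.length = 0
  · have := numH_le_length p
    omega
  · obtain ⟨R, hRlen⟩ := lift3 p cM.2 hmax
    obtain ⟨V₁, hV₁, -⟩ := vert_walk u.1 u.2 (cM.2 + 1)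
    obtain ⟨V₂, hV₂, -⟩ := vert_walk v.1 (cM.2 + 1) v.2
    have hh : u.2 ≤ cM.2 := hmax _ (Walk.start_mem_support _)
    have hk : v.2 ≤ cM.2 := hmax _ (Walk.end_mem_support _)
    have hWle : (horoball X).dist u v ≤ (V₁.append (R.append V₂)).length :=
      SimpleGraph.dist_le _
    rw [Walk.length_append, Walk.length_append] at hWle
    omega

lemma normal_sub_le_numH {u v : X × ℕ} (q : (horoball X).Walk u v) :
    ∀ (a b : ℕ), b ≤ q.length →
    (∀ m, a ≤ m → m < b → (q.getVert m).2 = (q.getVert (m + 1)).2) →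
    b - a ≤ numH q := by
  induction q with
  | nil =>
      intro a b hb _
      simp only [Walk.length_nil] at hb
      omega
  | cons ha q ih =>
      rename_i s a' b'
      intro a b hb hcond
      cases b with
      | zero => simp
      | succ b₀ =>
          cases a with
          | zero =>
              have h0 := hcond 0 (le_refl _) (by omega)
              rw [Walk.getVert_zero] at h0
              have h1 : (Walk.cons ha q).getVert 1 = q.getVert 0 := Walk.getVert_cons_succ _ _
              rw [h1, Walk.getVert_zero] at h0
              have hih := ih 0 b₀ (by simp [Walk.length_cons] at hb; omega) ?_
              · rw [numH_cons, if_pos h0]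
                omega
              · intro m hm hmb
                have := hcond (m + 1) (by omega) (by omega)
                rwa [Walk.getVert_cons_succ, Walk.getVert_cons_succ] at this
          | succ a₀ =>
              have hih := ih a₀ b₀ (by simp [Walk.length_cons] at hb; omega) ?_
              · rw [numH_cons]
                split <;> omega
              · intro m hm hmb
                have := hcond (m + 1) (by omega) (by omega)
                rwa [Walk.getVert_cons_succ, Walk.getVert_cons_succ] at this

lemma one_le_depth_of_ne {u : X × ℕ} {w : X} {t : ℕ} (P₁ : (horoball X).Walk u (w, t))
    (hdep : ∀ c ∈ P₁.support, c.2 ≤ t) (hne : u.1 ≠ w) : 1 ≤ t := by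
  have hnum : numH P₁ ≠ 0 := by
    intro h0
    have hcd := coordDist P₁ t hdep
    rw [h0] at hcd
    simp at hcd
    exact hne (dist_le_zero.mp (by simpa using hcd))
  obtain ⟨c', hc', h1⟩ := exists_depth_one_of_numH_pos P₁ hnum
  exact le_trans h1 (hdep c' hc')

end HoroAux

open HoroAux SimpleGraph Walk

/-- In the combinatorial horoball over a 1-discrete metric space:
(1) the horizontal segment of any normal geodesic has length at most 5; and
(2) any geodesic between two vertices lies within Hausdorff distance 4 of a
normal geodesic with the same endpoints. -/
theorem stmt2 {X : Type*} [MetricSpace X]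
    (hdisc : ∀ x y : X, x ≠ y → 1 ≤ dist x y) :
    (∀ (u v : X × ℕ) (q : (horoball X).Walk u v),
      q.length = (horoball X).dist u v →
      ∀ a b : ℕ, NormalAt q a b → b - a ≤ 5) ∧
    (∀ (u v : X × ℕ) (p : (horoball X).Walk u v),
      p.length = (horoball X).dist u v →
      ∃ q : (horoball X).Walk u v, q.length = (horoball X).dist u v ∧
        (∃ a b : ℕ, NormalAt q a b) ∧
        (∀ w ∈ p.support, ∃ w' ∈ q.support, (horoball X).dist w w' ≤ 4) ∧
        (∀ w' ∈ q.support, ∃ w ∈ p.support, (horoball X).dist w w' ≤ 4)) := by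
  constructor
  · rintro u v q hgeo a b ⟨hab, hbl, h1, h2, h3⟩
    have h5 := numH_le_five q hgeo
    have h6 := normal_sub_le_numH q a b hbl h2
    omega
  · rintro ⟨x, h⟩ ⟨y, k⟩ p hgeo
    by_cases hp0 : p.length = 0
    · refine ⟨p, hgeo, ⟨0, 0, le_refl _, by omega, ?_, ?_, ?_⟩, ?_, ?_⟩
      · intro m hm
        exact absurd hm (by omega)
      · intro m _ hm
        exact absurd hm (by omega)
      · intro m _ hm
        rw [hp0] at hm
        exact absurd hm (by omega)
      · intro w hw
        exact ⟨w, hw, by simp [SimpleGraph.dist_self]⟩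
      · intro w hw
        exact ⟨w, hw, by simp [SimpleGraph.dist_self]⟩
    · obtain ⟨cM, hcM, hmax⟩ := exists_max_depth p
      have hatt : ∃ c ∈ p.support, c.2 = cM.2 := ⟨cM, hcM, rfl⟩
      have hkey := key_eq p hgeo hmax hatt
      have hh : h ≤ cM.2 := hmax _ (Walk.start_mem_support _)
      have hk : k ≤ cM.2 := hmax _ (Walk.end_mem_support _)
      have hL1 : 1 ≤ cM.2 := by
        obtain ⟨c₁, hc₁, h1c⟩ := exists_depth_one_of_length_pos p hp0
        exact le_trans h1c (hmax _ hc₁)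
      have hgeoR : p.reverse.length = (horoball X).dist ((y,k) : X × ℕ) (x,h) := by
        rw [Walk.length_reverse, hgeo, SimpleGraph.dist_comm]
      have hmaxR : ∀ c' ∈ p.reverse.support, c'.2 ≤ cM.2 := by
        intro c' hc'
        rw [Walk.support_reverse, List.mem_reverse] at hc'
        exact hmax c' hc'
      have hattR : ∃ c ∈ p.reverse.support, c.2 = cM.2 :=
        ⟨cM, by rw [Walk.support_reverse, List.mem_reverse]; exact hcM, rfl⟩
      obtain ⟨R, hRlen, hRdep, hRcov, hRsplit⟩ := lift1 p cM.2 hL1 hmax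
      obtain ⟨V₁, hV₁len, hV₁mem⟩ := vert_walk x h cM.2
      obtain ⟨V₂, hV₂len, hV₂mem⟩ := vert_walk y cM.2 k
      set q := V₁.append (R.append V₂) with hqdef
      have hqlen : q.length = p.length := by
        rw [hqdef, Walk.length_append, Walk.length_append, hV₁len, hRlen, hV₂len]
        omega
      have hmemq₁ : ∀ c ∈ V₁.support, c ∈ q.support := by
        intro c hc
        rw [hqdef, Walk.mem_support_append_iff]
        exact Or.inl hc
      have hmemqR : ∀ c ∈ R.support, c ∈ q.support := by
        intro c hc
        rw [hqdef, Walk.mem_support_append_iff, Walk.mem_support_append_iff]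
        exact Or.inr (Or.inl hc)
      have hmemq₂ : ∀ c ∈ V₂.support, c ∈ q.support := by
        intro c hc
        rw [hqdef, Walk.mem_support_append_iff, Walk.mem_support_append_iff]
        exact Or.inr (Or.inr hc)
      have hV₁L : V₁.length = cM.2 - h := by omega
      refine ⟨q, by rw [hqlen, hgeo], ⟨cM.2 - h, cM.2 - h + R.length, ?_, ?_, ?_, ?_, ?_⟩, ?_, ?_⟩
      · omega
      · omega
      · -- initial vertical segment
        have gv : ∀ i, i ≤ V₁.length → (q.getVert i).1 = x := by
          intro i hi
          rw [hqdef, Walk.getVert_append]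
          split
          · exact ((hV₁mem _).mp (HoroAux.getVert_mem_support V₁ i)).1
          · have hieq : i = V₁.length := by omega
            rw [hieq, Nat.sub_self, Walk.getVert_zero]
        intro m hm
        rw [gv m (by omega), gv (m+1) (by omega)]
      · -- horizontal segment
        have gvm : ∀ i, V₁.length ≤ i → i ≤ V₁.length + R.length → (q.getVert i).2 = cM.2 := by
          intro i hi1 hi2
          rw [hqdef, Walk.getVert_append, if_neg (by omega), Walk.getVert_append]
          split
          · exact hRdep _ (HoroAux.getVert_mem_support R _)
          · have hieq : i - V₁.length = R.length := by omega
            rw [hieq, Nat.sub_self, Walk.getVert_zero]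
        intro m hm1 hm2
        rw [gvm m (by omega) (by omega), gvm (m+1) (by omega) (by omega)]
      · -- final vertical segment
        have gvt : ∀ i, V₁.length + R.length ≤ i → (q.getVert i).1 = y := by
          intro i hi
          rw [hqdef, Walk.getVert_append, if_neg (by omega), Walk.getVert_append,
            if_neg (by omega)]
          exact ((hV₂mem _).mp (HoroAux.getVert_mem_support V₂ _)).1
        intro m hm1 hm2
        rw [gvt m (by omega), gvt (m+1) (by omega)]
      · -- p close to q
        intro c hc
        by_cases hcL : c.2 = cM.2
        · obtain ⟨c', hc', hcc⟩ := hRcov c hc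
          have hceq : c' = c := Prod.ext hcc (by rw [hRdep c' hc', hcL])
          refine ⟨c', hmemqR c' hc', ?_⟩
          rw [hceq, SimpleGraph.dist_self]
          omega
        · have hcL' : c.2 < cM.2 := by
            have := hmax c hc
            omega
          obtain ⟨P₁, P₂, hpeq⟩ := (Walk.mem_support_iff_exists_append).mp hc
          have hcMloc : cM ∈ P₁.support ∨ cM ∈ P₂.support := by
            rw [hpeq, Walk.mem_support_append_iff] at hcM
            exact hcM
          rcases hcMloc with hA | hB
          · -- descending side: target (y, c.2)
            have hsplitR : p.reverse = P₂.reverse.append P₁.reverse := by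
              rw [hpeq, Walk.reverse_append]
            obtain ⟨hdep₂, hm₂, hdisty⟩ := kasc p.reverse hgeoR hmaxR hsplitR
              ⟨cM, by rw [Walk.support_reverse, List.mem_reverse]; exact hA, rfl⟩ hcL'
            have hk2 : k ≤ c.2 := hdep₂ _ (Walk.start_mem_support _)
            refine ⟨(y, c.2), hmemq₂ _ ((hV₂mem _).mpr ⟨rfl, Or.inr ⟨hk2, by omega⟩⟩), ?_⟩
            have hsd : (horoball X).dist c ((y, c.2) : X × ℕ) ≤ 1 := by
              apply step_dist
              · rw [_root_.dist_comm]
                exact hdisty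
              · intro hne
                exact one_le_depth_of_ne P₂.reverse hdep₂ (fun hxy => hne hxy.symm)
            omega
          · -- ascending side: target (x, c.2)
            obtain ⟨hdep₁, hm₁, hdistx⟩ := kasc p hgeo hmax hpeq ⟨cM, hB, rfl⟩ hcL'
            have hh2 : h ≤ c.2 := hdep₁ _ (Walk.start_mem_support _)
            refine ⟨(x, c.2), hmemq₁ _ ((hV₁mem _).mpr ⟨rfl, Or.inl ⟨hh2, by omega⟩⟩), ?_⟩
            have hsd : (horoball X).dist c ((x, c.2) : X × ℕ) ≤ 1 := by
              apply step_dist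
              · rw [_root_.dist_comm]
                exact hdistx
              · intro hne
                exact one_le_depth_of_ne P₁ hdep₁ (fun hxy => hne hxy.symm)
            omega
      · -- q close to p
        intro c' hc'
        rw [hqdef, Walk.mem_support_append_iff, Walk.mem_support_append_iff] at hc'
        have hpowmono : ∀ {a b : ℕ}, a ≤ b → (2:ℝ)^a ≤ 2^b :=
          fun hab => pow_le_pow_right₀ (by norm_num) hab
        have hL11 : cM.2 - 1 + 1 = cM.2 := by omega
        have hsplitpow : (2:ℝ)^(cM.2-1) + 2^(cM.2-1) = 2^cM.2 := by
          have e : (2:ℝ)^cM.2 = 2^(cM.2-1+1) := by rw [hL11]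
          rw [e, pow_succ]
          ring
        rcases hc' with hc' | hc' | hc'
        · -- on V₁
          obtain ⟨hx1, hrange⟩ := (hV₁mem _).mp hc'
          have hc'eq : c' = (x, c'.2) := Prod.ext hx1 rfl
          obtain ⟨c, hcp, hd⟩ := near_x p hgeo hmax hatt
            (show ((x,h) : X × ℕ).2 ≤ c'.2 by simp; omega) (show c'.2 ≤ cM.2 by omega)
          refine ⟨c, hcp, ?_⟩
          rw [SimpleGraph.dist_comm, hc'eq]
          exact le_trans hd (by omega)
        · -- on R
          have hc'dep : c'.2 = cM.2 := hRdep c' hc'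
          rcases hRsplit c' hc' with hc'x | ⟨d1, d2, hd, P₁, P₂, hpeq2, hd2c, hdd⟩
          · have hc'eq : c' = (x, cM.2) := Prod.ext hc'x hc'dep
            obtain ⟨c, hcp, hd⟩ := near_x p hgeo hmax hatt
              (show ((x,h) : X × ℕ).2 ≤ cM.2 by simp; omega) (le_refl _)
            refine ⟨c, hcp, ?_⟩
            rw [SimpleGraph.dist_comm, hc'eq]
            exact le_trans hd (by omega)
          · have hadj2 : 1 ≤ d1.2 ∧ 0 < dist d1.1 d2.1 ∧ dist d1.1 d2.1 ≤ 2 ^ d1.2 := by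
              rcases hd with ⟨e1, e2⟩ | ⟨e1, e2, e3, e4⟩
              · omega
              · exact ⟨e2, e3, e4⟩
            have hd2p : d2 ∈ p.support := by
              rw [hpeq2, Walk.mem_support_append_iff]
              refine Or.inr ?_
              rw [Walk.support_cons]
              exact List.mem_cons_of_mem _ (Walk.start_mem_support _)
            have hd2le : d2.2 ≤ cM.2 := hmax d2 hd2p
            by_cases hnear : cM.2 ≤ d2.2 + 4
            · obtain ⟨V₃, hV₃len, -⟩ := vert_walk d2.1 cM.2 d2.2
              have hdle := SimpleGraph.dist_le V₃
              refine ⟨d2, hd2p, ?_⟩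
              rw [SimpleGraph.dist_comm,
                show c' = (d2.1, cM.2) from Prod.ext hd2c.symm hc'dep]
              exact le_trans hdle (by omega)
            · have hfar : d2.2 + 5 ≤ cM.2 := by omega
              have hcMloc : cM ∈ P₁.support ∨ cM ∈ (Walk.cons hd P₂).support := by
                rw [hpeq2, Walk.mem_support_append_iff] at hcM
                exact hcM
              rcases hcMloc with hA2 | hB2
              · -- attainer before the hop
                have hQeq : p = (P₁.concat hd).append P₂ := by
                  rw [Walk.concat_append]
                  exact hpeq2
                have hsplitR : p.reverse = P₂.reverse.append (P₁.concat hd).reverse := by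
                  rw [hQeq, Walk.reverse_append]
                obtain ⟨hdep₂, hm₂, hdisty⟩ := kasc p.reverse hgeoR hmaxR hsplitR
                  ⟨cM, by
                    rw [Walk.support_reverse, List.mem_reverse, Walk.support_concat,
                      List.mem_append]
                    exact Or.inl hA2, rfl⟩ (by omega)
                have hk2 : k ≤ d2.2 := hdep₂ _ (Walk.start_mem_support _)
                obtain ⟨w₀, hw₀mem, hw₀d⟩ := find_near p.reverse hgeoR hmaxR hattR
                  (show ((y,k):X×ℕ).2 + 1 ≤ cM.2 by simp; omega)
                rw [Walk.support_reverse, List.mem_reverse] at hw₀mem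
                refine ⟨(w₀, cM.2 - 1), hw₀mem, ?_⟩
                have hdzw : dist c'.1 w₀ ≤ 2 ^ cM.2 := by
                  rw [← hd2c]
                  have t1 := dist_triangle d2.1 y w₀
                  have e0 : dist d2.1 y ≤ 2^d2.2 := by
                    rw [_root_.dist_comm]
                    exact hdisty
                  have q1 : (2:ℝ)^d2.2 ≤ 2^(cM.2-1) := hpowmono (by omega)
                  linarith [hsplitpow, hw₀d]
                have h2s := two_step (z := c'.1) (by omega) hdzw
                rw [SimpleGraph.dist_comm,
                  show c' = (c'.1, cM.2) from Prod.ext rfl hc'dep]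
                exact le_trans h2s (by omega)
              · -- attainer after the hop
                obtain ⟨hdep₁, hm₁, hdistx⟩ := kasc p hgeo hmax hpeq2
                  ⟨cM, hB2, rfl⟩ (show d1.2 < cM.2 by omega)
                have hh2 : h ≤ d1.2 := hdep₁ _ (Walk.start_mem_support _)
                obtain ⟨w₀, hw₀mem, hw₀d⟩ := find_near p hgeo hmax hatt
                  (show ((x,h):X×ℕ).2 + 1 ≤ cM.2 by simp; omega)
                refine ⟨(w₀, cM.2 - 1), hw₀mem, ?_⟩
                have hdzw : dist c'.1 w₀ ≤ 2 ^ cM.2 := by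
                  rw [← hd2c]
                  have t1 := dist_triangle d2.1 d1.1 w₀
                  have t2 := dist_triangle d1.1 x w₀
                  have e1 : dist d2.1 d1.1 ≤ 2^d1.2 := by
                    rw [_root_.dist_comm]
                    exact hadj2.2.2
                  have e2 : dist d1.1 x ≤ 2^d1.2 := by
                    rw [_root_.dist_comm]
                    exact hdistx
                  have q1 := hpowmono (show d1.2 + 1 ≤ cM.2 - 1 by omega)
                  have q2 : (2:ℝ)^(d1.2+1) = 2^d1.2 + 2^d1.2 := by
                    rw [pow_succ]
                    ring
                  linarith [hsplitpow, hw₀d]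
                have h2s := two_step (z := c'.1) (by omega) hdzw
                rw [SimpleGraph.dist_comm,
                  show c' = (c'.1, cM.2) from Prod.ext rfl hc'dep]
                exact le_trans h2s (by omega)
        · -- on V₂
          obtain ⟨hy1, hrange⟩ := (hV₂mem _).mp hc'
          have hc'eq : c' = (y, c'.2) := Prod.ext hy1 rfl
          obtain ⟨c, hcp, hd⟩ := near_x p.reverse hgeoR hmaxR hattR
            (show ((y,k) : X × ℕ).2 ≤ c'.2 by simp; omega) (show c'.2 ≤ cM.2 by omega)
          rw [Walk.support_reverse, List.mem_reverse] at hcp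
          refine ⟨c, hcp, ?_⟩
          rw [SimpleGraph.dist_comm, hc'eq]
          exact le_trans hd (by omega)
end

section
/- Let (X,d) be a geodesic δ-hyperbolic space and for each pair (x,y) choose a geodesic γ_{x,y} from x to y, defining γ(x,y,t) = γ_{x,y}(t·d(x,y)). Then γ is a (1, 8δ)-geodesic coarsely convex bicombing: for all x₁,x₂,y₁,y₂ ∈ X, a,b,c ∈ [0,1], with y₁' = γ(x₁,y₁,a), y₂' = γ(x₂,y₂,b), we have d(γ(x₁,y₁,ca), γ(x₂,y₂,cb)) ≤ (1−c)·d(x₁,x₂) + c·d(y₁',y₂') + 8δ. -/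
open Set

/-- `γ` is a geodesic bicombing on `X`. -/
def IsGeodBicombing {X : Type*} [MetricSpace X] (γ : X → X → ℝ → X) : Prop :=
  (∀ x y : X, γ x y 0 = x) ∧ (∀ x y : X, γ x y 1 = y) ∧
    ∀ x y : X, ∀ t ∈ Icc (0:ℝ) 1, ∀ s ∈ Icc (0:ℝ) 1,
      dist (γ x y t) (γ x y s) = |t - s| * dist x y

/-- `f` is a (unit-speed) geodesic segment from `x` to `y`. -/
def IsGeodSegment {X : Type*} [MetricSpace X] (f : ℝ → X) (x y : X) : Prop :=
  f 0 = x ∧ f (dist x y) = y ∧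
    ∀ s ∈ Icc (0:ℝ) (dist x y), ∀ t ∈ Icc (0:ℝ) (dist x y),
      dist (f s) (f t) = |s - t|

/-- The Rips thin-triangle condition with constant `δ`: in any geodesic
triangle, every point on one side is within `δ` of the union of the other two
sides. -/
def RipsCondition (X : Type*) [MetricSpace X] (δ : ℝ) : Prop :=
  ∀ x y z : X, ∀ f g h : ℝ → X,
    IsGeodSegment f x y → IsGeodSegment g y z → IsGeodSegment h z x →
    ∀ t ∈ Icc (0:ℝ) (dist x y), ∃ u : X,
      ((∃ s ∈ Icc (0:ℝ) (dist y z), u = g s) ∨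
        (∃ s ∈ Icc (0:ℝ) (dist z x), u = h s)) ∧ dist (f t) u ≤ δ

/-! Split the quadrilateral `x₁, x₂, y₂', y₁'` along the diagonal `[x₁, y₂']`. In a `δ`-thin
triangle, the points at fraction `c` of the two sides issuing from a common vertex are at most
`c` times the third side plus `4δ` apart: each of them is `δ`-close to another side, and
comparing arc lengths along the sides costs at most `2δ` more. Applying this to the triangle
`x₁, y₁', y₂'` (common vertex `x₁`) and to `x₁, x₂, y₂'` (common vertex `y₂'`) and adding up
gives the bound with `8δ`. -/

lemma mul_mem_Icc_zero {c L : ℝ} (hc : c ∈ Icc (0:ℝ) 1) (hL : 0 ≤ L) : c * L ∈ Icc 0 L :=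
  ⟨mul_nonneg hc.1 hL, mul_le_of_le_one_left hL hc.2⟩

namespace IsGeodSegment

variable {X : Type*} [MetricSpace X] {f : ℝ → X} {x y : X} {s : ℝ}

lemma dist_apply_apply (hf : IsGeodSegment f x y) {t : ℝ} (hs : s ∈ Icc 0 (dist x y))
    (ht : t ∈ Icc 0 (dist x y)) : dist (f s) (f t) = |s - t| :=
  hf.2.2 s hs t ht

lemma dist_left_apply (hf : IsGeodSegment f x y) (hs : s ∈ Icc 0 (dist x y)) :
    dist x (f s) = s := by
  rw [← hf.1, hf.dist_apply_apply ⟨le_rfl, dist_nonneg⟩ hs, zero_sub, abs_neg,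
    abs_of_nonneg hs.1]

lemma dist_apply_right (hf : IsGeodSegment f x y) (hs : s ∈ Icc 0 (dist x y)) :
    dist (f s) y = dist x y - s := by
  conv_lhs => rw [← hf.2.1]
  rw [hf.dist_apply_apply hs ⟨dist_nonneg, le_rfl⟩, abs_sub_comm,
    abs_of_nonneg (sub_nonneg.2 hs.2)]

lemma symm (hf : IsGeodSegment f x y) : IsGeodSegment (fun s => f (dist x y - s)) y x := by
  refine ⟨by simpa using hf.2.1, by simpa [dist_comm y x] using hf.1, fun s hs t ht => ?_⟩
  rw [dist_comm y x] at hs ht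
  rw [hf.dist_apply_apply ⟨by linarith [hs.2], by linarith [hs.1]⟩
    ⟨by linarith [ht.2], by linarith [ht.1]⟩, abs_sub_comm]
  congr 1
  ring

lemma restrict (hf : IsGeodSegment f x y) {t : ℝ} (ht : t ∈ Icc 0 (dist x y)) :
    IsGeodSegment f x (f t) := by
  have hsub : Icc 0 (dist x (f t)) ⊆ Icc 0 (dist x y) := by
    rw [hf.dist_left_apply ht]; exact Icc_subset_Icc_right ht.2
  refine ⟨hf.1, by rw [hf.dist_left_apply ht], fun s hs u hu => ?_⟩
  exact hf.dist_apply_apply (hsub hs) (hsub hu)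

end IsGeodSegment

lemma image_dist_sub_Icc_dist {X : Type*} [MetricSpace X] (f : ℝ → X) (x y : X) :
    (fun s => f (dist x y - s)) '' Icc 0 (dist y x) = f '' Icc 0 (dist x y) := by
  rw [← image_image f (fun s => dist x y - s), image_const_sub_Icc, dist_comm y x, sub_self,
    sub_zero]

namespace IsGeodBicombing

variable {X : Type*} [MetricSpace X] {γ : X → X → ℝ → X}

lemma dist_left_apply (hγ : IsGeodBicombing γ) (x y : X) {a : ℝ} (ha : a ∈ Icc (0:ℝ) 1) :
    dist x (γ x y a) = a * dist x y := by
  have h := hγ.2.2 x y 0 ⟨le_rfl, zero_le_one⟩ a ha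
  rwa [hγ.1, zero_sub, abs_neg, abs_of_nonneg ha.1] at h

lemma apply_mul_dist_div_dist (hγ : IsGeodBicombing γ) (x y : X) {t : ℝ}
    (ht : t ∈ Icc (0:ℝ) 1) : γ x y (t * dist x y / dist x y) = γ x y t := by
  rcases eq_or_ne (dist x y) 0 with h0 | hne
  · have h := hγ.2.2 x y t ht 0 ⟨le_rfl, zero_le_one⟩
    rw [hγ.1, h0, mul_zero, dist_eq_zero] at h
    rw [h0, div_zero, hγ.1, h]
  · rw [mul_div_cancel_right₀ _ hne]

lemma isGeodSegment (hγ : IsGeodBicombing γ) (x y : X) :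
    IsGeodSegment (fun s => γ x y (s / dist x y)) x y := by
  have hmem : ∀ s ∈ Icc 0 (dist x y), s / dist x y ∈ Icc (0:ℝ) 1 := fun s hs =>
    ⟨div_nonneg hs.1 dist_nonneg, div_le_one_of_le₀ hs.2 dist_nonneg⟩
  refine ⟨by simpa using hγ.1 x y, ?_, fun s hs t ht => ?_⟩
  · simpa [hγ.2.1] using hγ.apply_mul_dist_div_dist x y (t := 1) ⟨zero_le_one, le_rfl⟩
  · have hst : dist x y = 0 → |s - t| = 0 := fun h0 => by
      rw [h0] at hs ht
      rw [le_antisymm hs.2 hs.1, le_antisymm ht.2 ht.1, sub_self, abs_zero]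
    rw [hγ.2.2 x y _ (hmem s hs) _ (hmem t ht), div_sub_div_same, abs_div, abs_dist,
      div_mul_cancel_of_imp hst]

lemma isGeodSegment_apply (hγ : IsGeodBicombing γ) (x y : X) {a : ℝ}
    (ha : a ∈ Icc (0:ℝ) 1) : IsGeodSegment (fun s => γ x y (s / dist x y)) x (γ x y a) := by
  simpa only [hγ.apply_mul_dist_div_dist x y ha] using
    (hγ.isGeodSegment x y).restrict (mul_mem_Icc_zero ha dist_nonneg)

lemma apply_mul_dist_left_apply_div_dist (hγ : IsGeodBicombing γ) (x y : X) {a c : ℝ}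
    (ha : a ∈ Icc (0:ℝ) 1) (hc : c ∈ Icc (0:ℝ) 1) :
    γ x y (c * dist x (γ x y a) / dist x y) = γ x y (c * a) := by
  rw [hγ.dist_left_apply x y ha, ← mul_assoc,
    hγ.apply_mul_dist_div_dist x y ⟨mul_nonneg hc.1 ha.1, mul_le_one₀ hc.2 ha.1 ha.2⟩]

end IsGeodBicombing

section Proportional

variable {X : Type*} [MetricSpace X] {f g m : ℝ → X} {x y z : X} {c ε : ℝ}

lemma dist_proportional_le_of_near_side (hf : IsGeodSegment f x y) (hg : IsGeodSegment g x z)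
    (hc : c ∈ Icc (0:ℝ) 1) {s : ℝ} (hs : s ∈ Icc 0 (dist x z))
    (hnear : dist (f (c * dist x y)) (g s) ≤ ε) :
    dist (f (c * dist x y)) (g (c * dist x z)) ≤ c * dist y z + 2 * ε := by
  have hcxz := mul_mem_Icc_zero hc (dist_nonneg (x := x) (y := z))
  have hs_near : |s - c * dist x y| ≤ ε := by
    have h := abs_dist_sub_le (g s) (f (c * dist x y)) x
    rw [dist_comm _ x, dist_comm _ x, hg.dist_left_apply hs,
      hf.dist_left_apply (mul_mem_Icc_zero hc dist_nonneg)] at h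
    exact h.trans ((dist_comm _ _).trans_le hnear)
  have hsides : c * |dist x y - dist x z| ≤ c * dist y z := by
    have h := abs_dist_sub_le y z x
    rw [dist_comm y x, dist_comm z x] at h
    exact mul_le_mul_of_nonneg_left h hc.1
  have hs_far : |s - c * dist x z| ≤ ε + c * dist y z := calc
    |s - c * dist x z| = |(s - c * dist x y) + c * (dist x y - dist x z)| := by ring_nf
    _ ≤ |s - c * dist x y| + c * |dist x y - dist x z| := by
      rw [← abs_of_nonneg hc.1, ← abs_mul, abs_of_nonneg hc.1]; exact abs_add_le _ _
    _ ≤ ε + c * dist y z := add_le_add hs_near hsides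
  calc dist (f (c * dist x y)) (g (c * dist x z))
      ≤ dist (f (c * dist x y)) (g s) + dist (g s) (g (c * dist x z)) := dist_triangle _ _ _
    _ ≤ ε + (ε + c * dist y z) := by rw [hg.dist_apply_apply hs hcxz]; gcongr
    _ = c * dist y z + 2 * ε := by ring

lemma dist_proportional_le_of_near_third_side (hf : IsGeodSegment f x y)
    (hg : IsGeodSegment g x z) (hm : IsGeodSegment m y z) (hc : c ∈ Icc (0:ℝ) 1) {s t : ℝ}
    (hs : s ∈ Icc 0 (dist y z)) (ht : t ∈ Icc 0 (dist y z))
    (hps : dist (f (c * dist x y)) (m s) ≤ ε) (hqt : dist (g (c * dist x z)) (m t) ≤ ε) :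
    dist (f (c * dist x y)) (g (c * dist x z)) ≤ c * dist y z + 4 * ε := by
  set p := f (c * dist x y)
  set q := g (c * dist x z)
  have hcxy := mul_mem_Icc_zero hc (dist_nonneg (x := x) (y := y))
  have hcxz := mul_mem_Icc_zero hc (dist_nonneg (x := x) (y := z))
  have hxp := hf.dist_left_apply hcxy
  have hpy := hf.dist_apply_right hcxy
  have hxq := hg.dist_left_apply hcxz
  have hqz := hg.dist_apply_right hcxz
  have hys := hm.dist_left_apply hs
  have hsz := hm.dist_apply_right hs
  have hyt := hm.dist_left_apply ht
  have htz := hm.dist_apply_right ht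
  have hyz : (1 - c) * dist y z ≤ (1 - c) * (dist x y + dist x z) :=
    mul_le_mul_of_nonneg_left (dist_triangle_left y z x) (sub_nonneg.2 hc.2)
  -- compare the paths `x → p → m s → z` and `x → q → m t → y` with the sides they bypass
  have hst : |s - t| ≤ c * dist y z + 2 * ε := by
    rw [abs_le]
    constructor <;>
      linarith [dist_triangle4 x p (m s) z, dist_triangle4 x q (m t) y, dist_triangle p (m s) y,
        dist_triangle q (m t) z, dist_comm (m s) y, dist_comm (m t) y]
  calc dist p q ≤ dist p (m s) + dist (m s) (m t) + dist (m t) q := dist_triangle4 _ _ _ _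
    _ ≤ ε + (c * dist y z + 2 * ε) + ε := by
      rw [hm.dist_apply_apply hs ht, dist_comm (m t)]; gcongr
    _ = c * dist y z + 4 * ε := by ring

end Proportional

namespace RipsCondition

variable {X : Type*} [MetricSpace X] {δ : ℝ} {f g m : ℝ → X} {x y z : X}

lemma exists_near (hX : RipsCondition X δ) (hf : IsGeodSegment f x y)
    (hg : IsGeodSegment g x z) (hm : IsGeodSegment m y z) {t : ℝ} (ht : t ∈ Icc 0 (dist x y)) :
    (∃ u ∈ m '' Icc 0 (dist y z), dist (f t) u ≤ δ) ∨
      ∃ u ∈ g '' Icc 0 (dist x z), dist (f t) u ≤ δ := by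
  obtain ⟨u, hu | hu, hdist⟩ := hX x y z f m _ hf hm hg.symm t ht
  · obtain ⟨s, hs, rfl⟩ := hu
    exact Or.inl ⟨m s, mem_image_of_mem m hs, hdist⟩
  · obtain ⟨s, hs, rfl⟩ := hu
    rw [← image_dist_sub_Icc_dist g x z]
    exact Or.inr ⟨_, mem_image_of_mem _ hs, hdist⟩

lemma dist_proportional_le (hX : RipsCondition X δ) (hf : IsGeodSegment f x y)
    (hg : IsGeodSegment g x z) (hm : IsGeodSegment m y z) {c : ℝ} (hc : c ∈ Icc (0:ℝ) 1) :
    dist (f (c * dist x y)) (g (c * dist x z)) ≤ c * dist y z + 4 * δ := by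
  have hp := hX.exists_near hf hg hm (mul_mem_Icc_zero hc dist_nonneg)
  have hq := hX.exists_near hg hf hm.symm (mul_mem_Icc_zero hc dist_nonneg)
  rw [image_dist_sub_Icc_dist] at hq
  rcases hp with ⟨_, ⟨s, hs, rfl⟩, hps⟩ | ⟨_, ⟨s, hs, rfl⟩, hps⟩
  · rcases hq with ⟨_, ⟨t, ht, rfl⟩, hqt⟩ | ⟨_, ⟨t, ht, rfl⟩, hqt⟩
    · exact dist_proportional_le_of_near_third_side hf hg hm hc hs ht hps hqt
    · have h := dist_proportional_le_of_near_side hg hf hc ht hqt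
      rw [dist_comm, dist_comm z y] at h
      linarith [dist_nonneg.trans hps]
  · linarith [dist_proportional_le_of_near_side hf hg hc hs hps, dist_nonneg.trans hps]

lemma dist_proportional_le_of_same_end (hX : RipsCondition X δ) (hf : IsGeodSegment f x z)
    (hg : IsGeodSegment g y z) (hm : IsGeodSegment m x y) {c : ℝ} (hc : c ∈ Icc (0:ℝ) 1) :
    dist (f (c * dist x z)) (g (c * dist y z)) ≤ (1 - c) * dist x y + 4 * δ := by
  have h := hX.dist_proportional_le hf.symm hg.symm hm (c := 1 - c)
    ⟨sub_nonneg.2 hc.2, sub_le_self _ hc.1⟩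
  rwa [dist_comm z x, dist_comm z y, ← one_sub_mul, sub_sub_cancel, ← one_sub_mul,
    sub_sub_cancel] at h

end RipsCondition

theorem stmt5_general {X : Type*} [MetricSpace X] (δ : ℝ)
    (hyp : RipsCondition X δ)
    (γ : X → X → ℝ → X) (hgeod : IsGeodBicombing γ) :
    ∀ x₁ x₂ y₁ y₂ : X, ∀ a ∈ Icc (0:ℝ) 1, ∀ b ∈ Icc (0:ℝ) 1, ∀ c ∈ Icc (0:ℝ) 1,
      dist (γ x₁ y₁ (c * a)) (γ x₂ y₂ (c * b)) ≤
        (1 - c) * dist x₁ x₂ + c * dist (γ x₁ y₁ a) (γ x₂ y₂ b) + 8 * δ := by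
  intro x₁ x₂ y₁ y₂ a ha b hb c hc
  set p := γ x₁ y₁ a
  set q := γ x₂ y₂ b
  have hp := hyp.dist_proportional_le (hgeod.isGeodSegment_apply x₁ y₁ ha)
    (hgeod.isGeodSegment x₁ q) (hgeod.isGeodSegment p q) hc
  have hq := hyp.dist_proportional_le_of_same_end (hgeod.isGeodSegment x₁ q)
    (hgeod.isGeodSegment_apply x₂ y₂ hb) (hgeod.isGeodSegment x₁ x₂) hc
  rw [hgeod.apply_mul_dist_left_apply_div_dist x₁ y₁ ha hc] at hp
  rw [hgeod.apply_mul_dist_left_apply_div_dist x₂ y₂ hb hc] at hq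
  linarith [dist_triangle (γ x₁ y₁ (c * a)) (γ x₁ q (c * dist x₁ q / dist x₁ q))
    (γ x₂ y₂ (c * b))]

/-- A geodesic bicombing obtained by choosing geodesics in a geodesic
`δ`-hyperbolic space is a `(1, 8δ)`-geodesic coarsely convex bicombing. -/
theorem stmt5 {X : Type*} [MetricSpace X] (δ : ℝ) (hδ : 0 ≤ δ)
    (hyp : RipsCondition X δ)
    (γ : X → X → ℝ → X) (hgeod : IsGeodBicombing γ) :
    ∀ x₁ x₂ y₁ y₂ : X, ∀ a ∈ Icc (0:ℝ) 1, ∀ b ∈ Icc (0:ℝ) 1, ∀ c ∈ Icc (0:ℝ) 1,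
      dist (γ x₁ y₁ (c * a)) (γ x₂ y₂ (c * b)) ≤
        (1 - c) * dist x₁ x₂ + c * dist (γ x₁ y₁ a) (γ x₂ y₂ b) + 8 * δ :=
  stmt5_general δ hyp γ hgeod
end

section
/- Separation of boundary fibers over distinct projection points: fix k, base point e ∈ X_k, and distinct v, w ∈ X_k. For every x ∈ ∂Z with π_k(x) = v and y ∈ ∂Z with π_k(y) = w, the Gromov product satisfies (x | y)_e < Ω(max{d(e,v), d(e,w)} + Ω), where Ω is the universal constant of the coarsely convex structure. -/
open Set ENNReal

/-- `g` is a (unit-speed) geodesic ray emanating from `e`. -/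
def IsRay {Z : Type*} [MetricSpace Z] (e : Z) (g : ℝ → Z) : Prop :=
  g 0 = e ∧ ∀ t s : ℝ, 0 ≤ t → 0 ≤ s → dist (g t) (g s) = |t - s|

/-- The Gromov product `(γ_e^x ∣ γ_e^y)_e` of two rays with threshold `D₁`. -/
noncomputable def rayRayProd {Z : Type*} [MetricSpace Z] (D₁ : ℝ)
    (g h : ℝ → Z) : ℝ≥0∞ :=
  sSup (ENNReal.ofReal '' {t : ℝ | 0 ≤ t ∧ dist (g t) (h t) ≤ D₁})

/-!
Beyond the exit times the two rays are joined only through `v` and `w`, so at time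
`t = max (d(e,v), d(e,w)) + Ω` they are at distance at least `2Ω + d(v,w) > Ω`. Hence `t`
lies beyond the Gromov product of the rays, and multiplying by `Ω` bounds `(x ∣ y)_e`.
-/

theorem IsRay.dist_apply_of_le {Z : Type*} [MetricSpace Z] {e : Z} {g : ℝ → Z}
    (hg : IsRay e g) {s t : ℝ} (hs : 0 ≤ s) (hst : s ≤ t) :
    dist (g t) (g s) = t - s := by
  rw [hg.2 t s (hs.trans hst) hs, abs_of_nonneg (sub_nonneg.2 hst)]

theorem rayRayProd_lt_of_exit {Z : Type*} [MetricSpace Z] {e v w : Z} (hvw : v ≠ w)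
    {Ω D₁ : ℝ} (hΩ : 0 ≤ Ω) {g h : ℝ → Z} (hg : IsRay e g) (hh : IsRay e h)
    (hgv : g (dist e v) = v) (hhw : h (dist e w) = w)
    (htree : ∀ t : ℝ, max (dist e v) (dist e w) ≤ t →
      dist (g t) (h t) = dist (g t) v + dist v w + dist w (h t))
    (hmax : ∀ t : ℝ, 0 ≤ t → ENNReal.ofReal t ≤ rayRayProd D₁ g h →
      dist (g t) (h t) ≤ Ω) :
    rayRayProd D₁ g h < ENNReal.ofReal (max (dist e v) (dist e w) + Ω) := by
  set M := max (dist e v) (dist e w)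
  have hvM : dist e v ≤ M := le_max_left _ _
  have hwM : dist e w ≤ M := le_max_right _ _
  have ht : M ≤ M + Ω := le_add_of_nonneg_right hΩ
  have far : Ω < dist (g (M + Ω)) (h (M + Ω)) := by
    have hgt := hg.dist_apply_of_le dist_nonneg (hvM.trans ht)
    have hht := hh.dist_apply_of_le dist_nonneg (hwM.trans ht)
    rw [hgv] at hgt
    rw [hhw] at hht
    rw [htree _ ht, hgt, dist_comm w, hht]
    linarith [dist_pos.2 hvw]
  by_contra! hle
  exact far.not_ge (hmax _ (dist_nonneg.trans (hvM.trans ht)) hle)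

theorem stmt12_general {Z : Type*} [MetricSpace Z]
    (e v w : Z)
    (hvw : v ≠ w) (Ω D₁ : ℝ) (hΩ : 1 ≤ Ω)
    (g h : ℝ → Z) (hg : IsRay e g) (hh : IsRay e h)
    -- the rays exit `X_k` at `v` resp. `w`: `π_k(x) = v`, `π_k(y) = w`
    (hgv : g (dist e v) = v) (hhw : h (dist e w) = w)
    -- tree structure: beyond the exit times, geodesics between the two rays
    -- pass through `v` and `w`
    (htree : ∀ t : ℝ, max (dist e v) (dist e w) ≤ t →
      dist (g t) (h t) = dist (g t) v + dist v w + dist w (h t))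
    -- up to the Gromov product of the rays, the rays stay `Ω`-close
    (hmax : ∀ t : ℝ, 0 ≤ t → ENNReal.ofReal t ≤ rayRayProd D₁ g h →
      dist (g t) (h t) ≤ Ω)
    -- the Gromov product `(x ∣ y)_e` of the boundary points is dominated by
    -- `Ω` times the Gromov product of the rays
    (q : ℝ≥0∞) (hq : q ≤ ENNReal.ofReal Ω * rayRayProd D₁ g h) :
    q < ENNReal.ofReal (Ω * (max (dist e v) (dist e w) + Ω)) := by
  have hΩ₀ : 0 < Ω := one_pos.trans_le hΩ
  calc q ≤ ENNReal.ofReal Ω * rayRayProd D₁ g h := hq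
    _ < ENNReal.ofReal Ω * ENNReal.ofReal (max (dist e v) (dist e w) + Ω) :=
        ENNReal.mul_lt_mul_right (ENNReal.ofReal_pos.2 hΩ₀).ne' ENNReal.ofReal_ne_top
          (rayRayProd_lt_of_exit hvw hΩ₀.le hg hh hgv hhw htree hmax)
    _ = ENNReal.ofReal (Ω * (max (dist e v) (dist e w) + Ω)) :=
        (ENNReal.ofReal_mul hΩ₀.le).symm

/-- Separation of boundary fibers over distinct projection points: in a proper
tree `Z` of geodesic coarsely convex spaces with piece `X_k ∋ e` and distinct
`v, w ∈ X_k`, let `x, y ∈ ∂Z` be boundary points with `π_k(x) = v` and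
`π_k(y) = w`, represented by the geodesic rays `g = γ_e^x`, `h = γ_e^y` which
exit `X_k` at `v` (at time `d(e,v)`) resp. at `w` (at time `d(e,w)`).  Then
the Gromov product satisfies `(x ∣ y)_e < Ω(max{d(e,v), d(e,w)} + Ω)`. -/
theorem stmt12 {Z : Type*} [MetricSpace Z] [ProperSpace Z]
    (Xk : Set Z) (e v w : Z) (he : e ∈ Xk) (hv : v ∈ Xk) (hw : w ∈ Xk)
    (hvw : v ≠ w) (Ω D₁ : ℝ) (hΩ : 1 ≤ Ω) (hD₁ : 0 ≤ D₁)
    (g h : ℝ → Z) (hg : IsRay e g) (hh : IsRay e h)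
    -- the rays exit `X_k` at `v` resp. `w`: `π_k(x) = v`, `π_k(y) = w`
    (hgv : g (dist e v) = v) (hhw : h (dist e w) = w)
    (hgout : ∀ t : ℝ, dist e v < t → g t ∉ Xk)
    (hhout : ∀ t : ℝ, dist e w < t → h t ∉ Xk)
    -- tree structure: beyond the exit times, geodesics between the two rays
    -- pass through `v` and `w`
    (htree : ∀ t : ℝ, max (dist e v) (dist e w) ≤ t →
      dist (g t) (h t) = dist (g t) v + dist v w + dist w (h t))
    -- up to the Gromov product of the rays, the rays stay `Ω`-close
    (hmax : ∀ t : ℝ, 0 ≤ t → ENNReal.ofReal t ≤ rayRayProd D₁ g h →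
      dist (g t) (h t) ≤ Ω)
    -- the Gromov product `(x ∣ y)_e` of the boundary points is dominated by
    -- `Ω` times the Gromov product of the rays
    (q : ℝ≥0∞) (hq : q ≤ ENNReal.ofReal Ω * rayRayProd D₁ g h) :
    q < ENNReal.ofReal (Ω * (max (dist e v) (dist e w) + Ω)) :=
  stmt12_general e v w hvw Ω D₁ hΩ g h hg hh hgv hhw htree hmax q hq
end
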